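/- Let Γ be a finite additive abelian group, S a multiset of elements of Γ with Cayley sum adjacency matrix A_S, and χ : Γ → ℂ an additive character that is not real-valued. Let α ∈ ℂ satisfy |α| = 1 and α² · χ(S) = |χ(S)|, and set x(v) = α·χ(v). Then the real-part vector Re(x) and the imaginary-part vector Im(x) are both nonzero, and they are real eigenvectors of A_S: A_S · Re(x) = |χ(S)| · Re(x) and A_S · Im(x) = −|χ(S)| · Im(x). -/

import Mathlib

/-!
Reindexing `v ↦ u + v` shows that a character `ψ` satisfies `A_S ψ = ψ(S) · ψ(-·)`, and
`ψ(-u) = conj ψ(u)` since `ψ` takes values in the roots of unity. The normalisation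
`α² ψ(S) = |ψ(S)|` then turns this into `A_S x = |ψ(S)| · conj x` for `x = α ψ`; as `A_S` is
real, the real and imaginary parts of this identity are the two eigenvector equations.
If `Re x` (or `Im x`) vanished, every `x v`, including `x 0 = α`, would lie on the line `iℝ`
(resp. `ℝ`), so every `ψ v = x v / α` would be real.
-/

open Matrix ComplexConjugate

lemma Multiset.sum_map_eq_sum_count {Γ M : Type*} [Fintype Γ] [DecidableEq Γ] [AddCommMonoid M]
    (S : Multiset Γ) (f : Γ → M) :
    (S.map f).sum = ∑ v, S.count v • f v := by
  rw [Finset.sum_multiset_map_count]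
  refine Finset.sum_subset (Finset.subset_univ _) fun v _ hv => ?_
  rw [Multiset.count_eq_zero.mpr (by simpa using hv), zero_smul]

lemma Matrix.mulVec_re {m n : Type*} [Fintype n] (A : Matrix m n ℝ) (x : n → ℂ) :
    A *ᵥ (fun j => (x j).re) = fun i => ((A.map (↑) *ᵥ x) i).re := by
  ext i
  simp [mulVec, dotProduct, Complex.re_sum]

lemma Matrix.mulVec_im {m n : Type*} [Fintype n] (A : Matrix m n ℝ) (x : n → ℂ) :
    A *ᵥ (fun j => (x j).im) = fun i => ((A.map (↑) *ᵥ x) i).im := by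
  ext i
  simp [mulVec, dotProduct, Complex.im_sum]

section CayleySum
variable {Γ : Type*} [AddCommGroup Γ] [DecidableEq Γ]

def cayleySumMatrix (R : Type*) [NatCast R] (S : Multiset Γ) : Matrix Γ Γ R :=
  Matrix.of fun u v => (S.count (u + v) : R)

lemma cayleySumMatrix_map_ofReal (S : Multiset Γ) :
    (cayleySumMatrix ℝ S).map (↑) = cayleySumMatrix ℂ S := by
  ext; simp [cayleySumMatrix]

variable [Fintype Γ]

lemma cayleySumMatrix_mulVec_addChar {R : Type*} [CommSemiring R] (S : Multiset Γ)
    (ψ : AddChar Γ R) : cayleySumMatrix R S *ᵥ ψ = fun u => ψ (-u) * (S.map ψ).sum := by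
  ext u
  calc ∑ v, (S.count (u + v) : R) * ψ v
      = ∑ w, (S.count w : R) * ψ (-u + w) :=
        Fintype.sum_equiv (Equiv.addLeft u) _ _ fun v => by simp
    _ = ψ (-u) * (S.map ψ).sum := by
        simp only [AddChar.map_add_eq_mul, Multiset.sum_map_eq_sum_count, Finset.mul_sum,
          nsmul_eq_mul]
        exact Finset.sum_congr rfl fun w _ => by ring

lemma cayleySumMatrix_mulVec_smul_addChar (S : Multiset Γ) (ψ : AddChar Γ ℂ) {α : ℂ}
    (hα : ‖α‖ = 1) (hα2 : α ^ 2 * (S.map ψ).sum = ‖(S.map ψ).sum‖) :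
    cayleySumMatrix ℂ S *ᵥ (fun v => α * ψ v)
      = fun u => ‖(S.map ψ).sum‖ * conj (α * ψ u) := by
  have hαα : conj α * α = 1 := by
    rw [Complex.conj_mul', hα]; norm_num
  rw [show (fun v => α * ψ v) = α • ⇑ψ from rfl, mulVec_smul, cayleySumMatrix_mulVec_addChar]
  ext u
  simp only [Pi.smul_apply, smul_eq_mul, ← hα2, map_mul, ← AddChar.map_neg_eq_conj]
  linear_combination -(α * ψ (-u) * (S.map ψ).sum) * hαα

end CayleySum

lemma Complex.im_eq_zero_of_re_mul_eq_zero {α a : ℂ} (hα : α ≠ 0) (hre : α.re = 0)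
    (h : (α * a).re = 0) : a.im = 0 := by
  have him : α.im ≠ 0 := fun him => hα (Complex.ext hre him)
  rw [mul_re, hre, zero_mul, zero_sub, neg_eq_zero] at h
  exact (mul_eq_zero.mp h).resolve_left him

lemma Complex.im_eq_zero_of_im_mul_eq_zero {α a : ℂ} (hα : α ≠ 0) (him : α.im = 0)
    (h : (α * a).im = 0) : a.im = 0 := by
  have hre : α.re ≠ 0 := fun hre => hα (Complex.ext hre him)
  rw [mul_im, him, zero_mul, add_zero] at h
  exact (mul_eq_zero.mp h).resolve_left hre

namespace AddChar
variable {G : Type*} [AddMonoid G] (ψ : AddChar G ℂ) {α : ℂ}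

lemma re_mul_ne_zero (hψ : ¬ ∀ a, (ψ a).im = 0) (hα : α ≠ 0) : (fun v => (α * ψ v).re) ≠ 0 :=
  fun h => hψ fun a => Complex.im_eq_zero_of_re_mul_eq_zero hα
    (by simpa using congrFun h 0) (congrFun h a)

lemma im_mul_ne_zero (hψ : ¬ ∀ a, (ψ a).im = 0) (hα : α ≠ 0) : (fun v => (α * ψ v).im) ≠ 0 :=
  fun h => hψ fun a => Complex.im_eq_zero_of_im_mul_eq_zero hα
    (by simpa using congrFun h 0) (congrFun h a)

end AddChar

/-- With `Γ`, `S`, a non-real additive character `χ`, and `α` with `|α| = 1`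
and `α² · χ(S) = |χ(S)|` as before, set `x v = α · χ v`.  Then the entrywise real part
`Re x` and imaginary part `Im x` are nonzero real vectors, and they are eigenvectors of
the real Cayley sum adjacency matrix `A_S(u,v) = m_S(u+v)` for the eigenvalues
`|χ(S)|` and `−|χ(S)|` respectively. -/
theorem cayley_sum_real_imaginary_eigenvectors
    {Γ : Type*} [AddCommGroup Γ] [Fintype Γ] [DecidableEq Γ]
    (S : Multiset Γ) (χ : Γ → ℂ)
    (hχ0 : χ 0 = 1) (hχadd : ∀ a b : Γ, χ (a + b) = χ a * χ b)
    (hnotreal : ¬ ∀ a : Γ, (χ a).im = 0)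
    (α : ℂ) (hα : ‖α‖ = 1)
    (hα2 : α ^ 2 * (S.map χ).sum = (‖(S.map χ).sum‖ : ℂ)) :
    (fun v : Γ => (α * χ v).re) ≠ 0 ∧
    (fun v : Γ => (α * χ v).im) ≠ 0 ∧
    (Matrix.of fun u v : Γ => (S.count (u + v) : ℝ)).mulVec (fun v => (α * χ v).re)
      = ‖(S.map χ).sum‖ • (fun v => (α * χ v).re) ∧
    (Matrix.of fun u v : Γ => (S.count (u + v) : ℝ)).mulVec (fun v => (α * χ v).im)
      = (-‖(S.map χ).sum‖) • (fun v => (α * χ v).im) := by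
  let ψ : AddChar Γ ℂ := ⟨χ, hχ0, hχadd⟩
  have hα0 : α ≠ 0 := norm_ne_zero_iff.mp (hα ▸ one_ne_zero)
  have heig : (cayleySumMatrix ℝ S).map (↑) *ᵥ (fun v => α * χ v)
      = fun u => ‖(S.map χ).sum‖ * conj (α * χ u) := by
    rw [cayleySumMatrix_map_ofReal]
    exact cayleySumMatrix_mulVec_smul_addChar S ψ hα hα2
  refine ⟨ψ.re_mul_ne_zero hnotreal hα0, ψ.im_mul_ne_zero hnotreal hα0, ?_, ?_⟩
  · rw [← cayleySumMatrix, Matrix.mulVec_re, heig]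
    ext u
    simp only [Complex.re_ofReal_mul, Complex.conj_re, Pi.smul_apply, smul_eq_mul]
  · rw [← cayleySumMatrix, Matrix.mulVec_im, heig]
    ext u
    simp only [Complex.im_ofReal_mul, Complex.conj_im, Pi.smul_apply, smul_eq_mul, mul_neg,
      neg_mul]
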